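/- Let (S,≤) be a partially ordered set and S' an isolated suborder with bottleneck of (S,≤). Let Q be the set of equivalence classes of ≡_{S'} partially ordered by ≤_{S'}, and let C' be a closure system of (Q, ≤_{S'}) with S' ∉ C'. Then C := ⋃C', the union of the equivalence classes belonging to C', is a closure system of (S,≤). -/

import Mathlib

/-- `S'` is an *isolated suborder* of the partially ordered set. -/
def IsIsolatedSuborder {α : Type*} [PartialOrder α] (S' : Set α) : Prop :=
  ∃ b t, IsLeast S' b ∧ IsGreatest S' t ∧
    ∀ x ∉ S', ∀ y ∈ S', (y ≤ x → t ≤ x) ∧ (x ≤ y → x ≤ b)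

/-- The equivalence class of `x` under `≡_{S'}`. -/
def eqClass {α : Type*} (S' : Set α) (x : α) : Set α :=
  {y | (x ∈ S' ∧ y ∈ S') ∨ (x ∉ S' ∧ y = x)}

/-- The set of equivalence classes of `≡_{S'}`. -/
def quotClasses {α : Type*} (S' : Set α) : Set (Set α) :=
  Set.range (eqClass S')

/-- The quotient relation on equivalence classes. -/
def qle {α : Type*} [PartialOrder α] (A B : Set α) : Prop :=
  ∃ a ∈ A, ∃ b ∈ B, a ≤ b

/-- `b` is the least element of `A` with respect to the relation `r`. -/
def IsLeastRel {β : Type*} (r : β → β → Prop) (A : Set β) (b : β) : Prop :=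
  b ∈ A ∧ ∀ y ∈ A, r b y

/-- `t` is the greatest element of `A` with respect to the relation `r`. -/
def IsGreatestRel {β : Type*} (r : β → β → Prop) (A : Set β) (t : β) : Prop :=
  t ∈ A ∧ ∀ y ∈ A, r y t

/-- `S'` is an isolated suborder of the ordered set with carrier `carrier` and
order relation `r`. -/
def IsIsolatedSuborderRel {β : Type*} (r : β → β → Prop) (carrier S' : Set β) : Prop :=
  S' ⊆ carrier ∧ ∃ b t, IsLeastRel r S' b ∧ IsGreatestRel r S' t ∧
    ∀ x ∈ carrier, x ∉ S' → ∀ y ∈ S', (r y x → r t x) ∧ (r x y → r x b)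

/-- `b` is a *bottleneck* of `x`: `b > x`, the interval `[x,b]` is a chain, and every
`y > x` lies in `[x,b]` or satisfies `y > b`. -/
def IsBottleneck {α : Type*} [PartialOrder α] (x b : α) : Prop :=
  x < b ∧ IsChain (· ≤ ·) (Set.Icc x b) ∧ ∀ y, x < y → y ∈ Set.Icc x b ∨ b < y

/-- A subset `C` of a partially ordered set is a *closure system* if for every `s`
the set of elements of `C` majorizing `s` has a least element. -/
def IsClosureSystem {α : Type*} [PartialOrder α] (C : Set α) : Prop :=
  ∀ s : α, ∃ m, IsLeast {c ∈ C | s ≤ c} m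

/-- `C` is a closure system of the ordered set with carrier `carrier` and order
relation `r`. -/
def IsClosureSystemRel {β : Type*} (r : β → β → Prop) (carrier C : Set β) : Prop :=
  C ⊆ carrier ∧ ∀ s ∈ carrier, ∃ m, (m ∈ C ∧ r s m) ∧ ∀ c ∈ C, r s c → r m c

/-!
A class of `≡_{S'}` other than `S'` is a singleton `{z}` with `z ∉ S'`, so if `S' ∉ C'` the
members of `C'` are singletons and `⋃C'` is a copy of `C'` inside `S`. Given `s`, take the least
class `{x} ∈ C'` above the class of `s`. It lies above `s` itself: if `s ∈ S'`, then some
`y ∈ S'` satisfies `y ≤ x`, and isolation gives `s ≤ ⊤_{S'} ≤ x`. It is least because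
`s ≤ c` with `{c} ∈ C'` means the class of `s` lies below `{c}`.
-/

section QuotientClasses

variable {α : Type*}

theorem eqClass_of_mem {S' : Set α} {x : α} (hx : x ∈ S') : eqClass S' x = S' := by
  ext y; simp [eqClass, hx]

theorem eqClass_of_notMem {S' : Set α} {x : α} (hx : x ∉ S') : eqClass S' x = {x} := by
  ext y; simp [eqClass, hx]

theorem mem_eqClass_self (S' : Set α) (x : α) : x ∈ eqClass S' x := by
  by_cases hx : x ∈ S'
  · exact Or.inl ⟨hx, hx⟩
  · exact Or.inr ⟨hx, rfl⟩

theorem exists_notMem_eq_singleton_of_mem_quotClasses {S' D : Set α}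
    (hD : D ∈ quotClasses S') (hne : D ≠ S') : ∃ z ∉ S', D = {z} := by
  obtain ⟨z, rfl⟩ := hD
  by_cases hz : z ∈ S'
  · exact absurd (eqClass_of_mem hz) hne
  · exact ⟨z, hz, eqClass_of_notMem hz⟩

theorem mem_sUnion_iff_singleton_mem {S' : Set α} {C' : Set (Set α)}
    (hsub : C' ⊆ quotClasses S') (hnotmem : S' ∉ C') {c : α} :
    c ∈ ⋃₀ C' ↔ {c} ∈ C' := by
  refine ⟨fun ⟨D, hD, hcD⟩ => ?_, fun hc => ⟨{c}, hc, rfl⟩⟩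
  obtain ⟨z, -, rfl⟩ :=
    exists_notMem_eq_singleton_of_mem_quotClasses (hsub hD) (ne_of_mem_of_not_mem hD hnotmem)
  rwa [Set.mem_singleton_iff.1 hcD]

section PartialOrder

variable [PartialOrder α]

theorem qle_singleton_singleton {x y : α} : qle {x} {y} ↔ x ≤ y := by
  simp [qle]

theorem le_of_qle_eqClass_singleton {S' : Set α} (hS' : IsIsolatedSuborder S') {s x : α}
    (hx : x ∉ S') (h : qle (eqClass S' s) {x}) : s ≤ x := by
  obtain ⟨_, _, -, ht, hiso⟩ := hS'
  obtain ⟨a, ha, b, hb, hab⟩ := h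
  have hax : a ≤ x := Set.mem_singleton_iff.1 hb ▸ hab
  rcases ha with ⟨hs, haS⟩ | ⟨-, rfl⟩
  · exact (ht.2 hs).trans ((hiso x hx a haS).1 hax)
  · exact hax

end PartialOrder

end QuotientClasses

theorem closureSystem_from_quotient_without_suborder_general {α : Type*} [PartialOrder α]
    (S' : Set α) (hS' : IsIsolatedSuborder S')
    (C' : Set (Set α)) (hC' : IsClosureSystemRel qle (quotClasses S') C')
    (hnotmem : S' ∉ C') :
    IsClosureSystem (⋃₀ C') := by
  obtain ⟨hsub, hcs⟩ := hC'
  intro s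
  obtain ⟨m, ⟨hmC, hsm⟩, hmin⟩ := hcs (eqClass S' s) ⟨s, rfl⟩
  obtain ⟨x, hx, rfl⟩ :=
    exists_notMem_eq_singleton_of_mem_quotClasses (hsub hmC) (ne_of_mem_of_not_mem hmC hnotmem)
  refine ⟨x, ⟨⟨{x}, hmC, rfl⟩, le_of_qle_eqClass_singleton hS' hx hsm⟩, ?_⟩
  rintro c ⟨hc, hsc⟩
  rw [mem_sUnion_iff_singleton_mem hsub hnotmem] at hc
  exact qle_singleton_singleton.1 (hmin {c} hc ⟨s, mem_eqClass_self S' s, c, rfl, hsc⟩)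

/-- Let `S'` be an isolated suborder with bottleneck of `(S,≤)`. If `C'` is a
closure system of the quotient with `S' ∉ C'`, then `⋃C'` is a closure system
of `(S,≤)`. -/
theorem closureSystem_from_quotient_without_suborder {α : Type*} [PartialOrder α]
    (S' : Set α) (hS' : IsIsolatedSuborder S')
    (hbn : ∃ t b, IsGreatest S' t ∧ IsBottleneck t b)
    (C' : Set (Set α)) (hC' : IsClosureSystemRel qle (quotClasses S') C')
    (hnotmem : S' ∉ C') :
    IsClosureSystem (⋃₀ C') :=
  closureSystem_from_quotient_without_suborder_general S' hS' C' hC' hnotmem
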